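/- For each k ∈ (0,1), the function k ↦ K'(k)/K(k) is differentiable at k with derivative d/dk (K'(k)/K(k)) = −π/(2 k k'² K(k)²), where k' = √(1−k²). -/

import Mathlib

open Real

/-- Complete elliptic integral of the first kind. -/
noncomputable def EllK (k : ℝ) : ℝ :=
  ∫ θ in (0:ℝ)..(π/2), 1 / Real.sqrt (1 - k^2 * Real.sin θ ^ 2)

/-- Complete elliptic integral of the second kind. -/
noncomputable def EllE (k : ℝ) : ℝ :=
  ∫ θ in (0:ℝ)..(π/2), Real.sqrt (1 - k^2 * Real.sin θ ^ 2)

/-- Complementary complete elliptic integral `K'(k) = K(√(1-k²))`. -/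
noncomputable def EllK' (k : ℝ) : ℝ := EllK (Real.sqrt (1 - k^2))

/-- Complementary elliptic integral of the second kind `E'(k) = E(√(1-k²))`. -/
noncomputable def EllE' (k : ℝ) : ℝ := EllE (Real.sqrt (1 - k^2))

/-- The nome `q = exp(-π K'(k)/K(k))`. -/
noncomputable def nome (k : ℝ) : ℝ := Real.exp (-π * EllK' k / EllK k)

/-- Jacobi's theta function `Θ(u,k) = 1 + 2 ∑_{n≥1} (-1)^n q^{n²} cos(nπu/K)`. -/
noncomputable def JTheta (u k : ℝ) : ℝ :=
  1 + 2 * ∑' n : ℕ, (-1 : ℝ)^(n+1) * nome k ^ ((n+1)^2) *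
    Real.cos (((n:ℝ)+1) * π * u / EllK k)

/-- Jacobi's theta function `H(u,k) = 2 ∑_{n≥0} (-1)^n q^{(n+1/2)²} sin((2n+1)πu/(2K))`. -/
noncomputable def JH (u k : ℝ) : ℝ :=
  2 * ∑' n : ℕ, (-1 : ℝ)^n * nome k ^ ((((n:ℝ) + 1/2)^2)) *
    Real.sin ((2*(n:ℝ)+1) * π * u / (2 * EllK k))

/-- Jacobi's theta function `H₁(u,k) = 2 ∑_{n≥0} q^{(n+1/2)²} cos((2n+1)πu/(2K))`. -/
noncomputable def JH1 (u k : ℝ) : ℝ :=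
  2 * ∑' n : ℕ, nome k ^ ((((n:ℝ) + 1/2)^2)) *
    Real.cos ((2*(n:ℝ)+1) * π * u / (2 * EllK k))

/-- Jacobi's theta function `Θ₁(u,k) = 1 + 2 ∑_{n≥1} q^{n²} cos(nπu/K)`. -/
noncomputable def JTheta1 (u k : ℝ) : ℝ :=
  1 + 2 * ∑' n : ℕ, nome k ^ ((n+1)^2) * Real.cos (((n:ℝ)+1) * π * u / EllK k)

/-- Jacobi's zeta function `zn(u,k) = Θ_u(u,k)/Θ(u,k)`. -/
noncomputable def zn (u k : ℝ) : ℝ := deriv (fun v => JTheta v k) u / JTheta u k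

/-- Jacobi's elliptic sine `sn(u,k) = H(u,k)/(√k Θ(u,k))`. -/
noncomputable def sn (u k : ℝ) : ℝ := JH u k / (Real.sqrt k * JTheta u k)

/-- Jacobi's elliptic cosine `cn(u,k) = √(k'/k) H₁(u,k)/Θ(u,k)`. -/
noncomputable def cn (u k : ℝ) : ℝ :=
  Real.sqrt (Real.sqrt (1 - k^2) / k) * JH1 u k / JTheta u k

/-- Jacobi's delta amplitude `dn(u,k) = √(k') Θ₁(u,k)/Θ(u,k)`. -/
noncomputable def dn (u k : ℝ) : ℝ :=
  Real.sqrt (Real.sqrt (1 - k^2)) * JTheta1 u k / JTheta u k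

/-!
Differentiating under the integral sign gives `dK/dk = (E - k'²K)/(k k'²)` and
`dE/dk = (E - K)/k`; the first needs `∫ Δ⁻³ = E/k'²`, which comes from integrating
`d/dθ (k² sin θ cos θ / Δ) = Δ - k'²/Δ³` over `[0, π/2]`. Consequently Legendre's expression
`EK' + E'K - KK'` has zero derivative on `(0, 1)`; it tends to `π/2` as `k → 0⁺`, because
`K → π/2`, `E' → 1` and `0 ≤ K'(K - E) ≤ (π/2)² k/k'` (from `K' ≤ π/(2k)` and
`K - E ≤ (π/2)(1/k' - k')`). Hence it is identically `π/2`, and the quotient rule gives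
`(K'/K)' = -(EK' + E'K - KK')/(k k'² K²)`.
-/

open Set Filter Topology Metric Function
open scoped Interval

local notation "Δ(" k ", " θ ")" => √(1 - k ^ 2 * sin θ ^ 2)

theorem hasDerivAt_intervalIntegral_of_continuousOn_deriv {E : Type*} [NormedAddCommGroup E]
    [NormedSpace ℝ E] {F F' : ℝ → ℝ → E} {U : Set ℝ} {x₀ a b : ℝ} (hU : IsOpen U) (hx₀ : x₀ ∈ U)
    (hF : ∀ x ∈ U, ContinuousOn (F x) [[a, b]])
    (hF' : ContinuousOn (uncurry F') (U ×ˢ [[a, b]]))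
    (hderiv : ∀ x ∈ U, ∀ t ∈ [[a, b]], HasDerivAt (F · t) (F' x t) x) :
    HasDerivAt (fun x => ∫ t in a..b, F x t) (∫ t in a..b, F' x₀ t) x₀ := by
  obtain ⟨ε, hε, hεU⟩ := nhds_basis_closedBall.mem_iff.1 (hU.mem_nhds hx₀)
  have hball : ball x₀ ε ⊆ U := ball_subset_closedBall.trans hεU
  obtain ⟨C, hC⟩ := ((isCompact_closedBall x₀ ε).prod isCompact_uIcc).exists_bound_of_continuousOn
    (hF'.mono (prod_mono hεU le_rfl))
  have hF'₀ : ContinuousOn (F' x₀) [[a, b]] :=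
    hF'.comp (f := fun t => (x₀, t)) (by fun_prop) fun t ht => ⟨hx₀, ht⟩
  refine (intervalIntegral.hasDerivAt_integral_of_dominated_loc_of_deriv_le
    (bound := fun _ => C) (ball_mem_nhds x₀ hε) ?_ (hF x₀ hx₀).intervalIntegrable
    ((hF'₀.mono uIoc_subset_uIcc).aestronglyMeasurable measurableSet_uIoc) ?_
    intervalIntegrable_const ?_).2
  · filter_upwards [ball_mem_nhds x₀ hε] with x hx
    exact ((hF x (hball hx)).mono uIoc_subset_uIcc).aestronglyMeasurable measurableSet_uIoc
  · exact .of_forall fun t ht x hx =>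
      hC (x, t) ⟨ball_subset_closedBall hx, uIoc_subset_uIcc ht⟩
  · exact .of_forall fun t ht x hx => hderiv x (hball hx) t (uIoc_subset_uIcc ht)

section Delta

variable {k θ : ℝ}

lemma one_sub_sq_mul_sin_sq_pos (hk : k ^ 2 < 1) (θ : ℝ) : 0 < 1 - k ^ 2 * sin θ ^ 2 := by
  nlinarith [sin_sq_le_one θ, sq_nonneg k, sq_nonneg (sin θ)]

lemma delta_pos (hk : k ^ 2 < 1) (θ : ℝ) : 0 < Δ(k, θ) :=
  sqrt_pos.2 (one_sub_sq_mul_sin_sq_pos hk θ)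

lemma sq_delta (hk : k ^ 2 < 1) (θ : ℝ) : Δ(k, θ) ^ 2 = 1 - k ^ 2 * sin θ ^ 2 :=
  sq_sqrt (one_sub_sq_mul_sin_sq_pos hk θ).le

lemma delta_le_one : Δ(k, θ) ≤ 1 :=
  sqrt_le_one.2 (by nlinarith [sq_nonneg k, sq_nonneg (sin θ)])

lemma sqrt_one_sub_sq_le_delta : √(1 - k ^ 2) ≤ Δ(k, θ) :=
  sqrt_le_sqrt (by nlinarith [sin_sq_le_one θ, sq_nonneg k])

lemma cos_le_delta (hk : k ^ 2 ≤ 1) : cos θ ≤ Δ(k, θ) :=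
  le_sqrt_of_sq_le (by nlinarith [sin_sq_add_cos_sq θ, sq_nonneg (sin θ)])

lemma delta_le_cos_add (hk : k ^ 2 ≤ 1) (hθ : θ ∈ Icc 0 (π / 2)) :
    Δ(k, θ) ≤ cos θ + √(1 - k ^ 2) * sin θ := by
  have hcos : 0 ≤ cos θ := cos_nonneg_of_mem_Icc ⟨by linarith [hθ.1, pi_pos], hθ.2⟩
  have hsin : 0 ≤ sin θ := sin_nonneg_of_nonneg_of_le_pi hθ.1 (by linarith [hθ.2, pi_pos])
  have hk' : √(1 - k ^ 2) ^ 2 = 1 - k ^ 2 := sq_sqrt (by linarith)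
  rw [sqrt_le_left (by positivity)]
  nlinarith [sin_sq_add_cos_sq θ, mul_nonneg (mul_nonneg (sqrt_nonneg (1 - k ^ 2)) hsin) hcos]

lemma continuous_delta : Continuous fun θ => Δ(k, θ) := by fun_prop

lemma hasDerivAt_mul_sin_mul_cos_div_delta (hk : k ^ 2 < 1) (θ : ℝ) :
    HasDerivAt (fun t => k ^ 2 * (sin t * cos t) / Δ(k, t))
      (Δ(k, θ) - (1 - k ^ 2) / Δ(k, θ) ^ 3) θ := by
  have hu := one_sub_sq_mul_sin_sq_pos hk θ
  have hΔ := delta_pos hk θ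
  have hΔsq := sq_delta hk θ
  have hu' : HasDerivAt (fun t => 1 - k ^ 2 * sin t ^ 2) (-(k ^ 2 * (2 * sin θ * cos θ))) θ := by
    simpa [mul_comm, mul_assoc, mul_left_comm] using
      (((hasDerivAt_sin θ).pow 2).const_mul (k ^ 2)).const_sub 1
  have h := (((hasDerivAt_sin θ).mul (hasDerivAt_cos θ)).const_mul (k ^ 2)).div
    ((hasDerivAt_sqrt hu.ne').comp θ hu') hΔ.ne'
  refine h.congr_deriv ?_
  simp only [comp_apply, Pi.mul_apply]
  field_simp
  rw [show Δ(k, θ) ^ 4 = (Δ(k, θ) ^ 2) ^ 2 by ring, hΔsq, cos_sq']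
  ring

end Delta

section Integrals

variable {k : ℝ}

lemma continuous_one_div_delta_pow (hk : k ^ 2 < 1) (n : ℕ) :
    Continuous fun θ => 1 / Δ(k, θ) ^ n :=
  continuous_const.div (continuous_delta.pow n) fun θ => pow_ne_zero n (delta_pos hk θ).ne'

lemma continuous_one_div_delta (hk : k ^ 2 < 1) : Continuous fun θ => 1 / Δ(k, θ) := by
  simpa using continuous_one_div_delta_pow hk 1

lemma integral_one_div_delta_pow_three (hk : k ^ 2 < 1) :
    ∫ θ in (0)..(π / 2), 1 / Δ(k, θ) ^ 3 = EllE k / (1 - k ^ 2) := by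
  have hk' : 1 - k ^ 2 ≠ 0 := by linarith
  have h := intervalIntegral.integral_eq_sub_of_hasDerivAt
    (fun θ _ => hasDerivAt_mul_sin_mul_cos_div_delta hk θ)
    ((continuous_delta.sub (continuous_const.div (continuous_delta.pow 3)
      fun θ => pow_ne_zero 3 (delta_pos hk θ).ne')).intervalIntegrable 0 (π / 2))
  simp only [div_eq_mul_one_div (1 - k ^ 2)] at h
  rw [intervalIntegral.integral_sub (continuous_delta.intervalIntegrable _ _)
    (((continuous_one_div_delta_pow hk 3).intervalIntegrable _ _).const_mul _),
    intervalIntegral.integral_const_mul] at h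
  simp only [cos_pi_div_two, sin_zero, mul_zero, zero_mul, zero_div, sub_zero] at h
  rw [EllE]
  field_simp
  linarith

lemma EllK_nonneg (k : ℝ) : 0 ≤ EllK k :=
  intervalIntegral.integral_nonneg (by positivity) fun θ _ => by positivity

lemma pi_div_two_le_EllK (hk : k ^ 2 < 1) : π / 2 ≤ EllK k := by
  calc π / 2 = ∫ _ in (0)..(π / 2), (1 : ℝ) := by simp
    _ ≤ EllK k := intervalIntegral.integral_mono_on (by positivity) intervalIntegrable_const
        ((continuous_one_div_delta hk).intervalIntegrable _ _) fun θ _ =>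
          (one_le_div (delta_pos hk θ)).2 delta_le_one

lemma EllK_le_pi_div_two_div_sqrt (hk : k ^ 2 < 1) : EllK k ≤ π / 2 / √(1 - k ^ 2) := by
  have hk' : 0 < √(1 - k ^ 2) := sqrt_pos.2 (by linarith)
  calc EllK k ≤ ∫ _ in (0)..(π / 2), 1 / √(1 - k ^ 2) :=
        intervalIntegral.integral_mono_on (by positivity)
          ((continuous_one_div_delta hk).intervalIntegrable _ _) intervalIntegrable_const
          fun θ _ => one_div_le_one_div_of_le hk' sqrt_one_sub_sq_le_delta
    _ = π / 2 / √(1 - k ^ 2) := by simp; ring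

lemma pi_div_two_mul_le_EllE : π / 2 * √(1 - k ^ 2) ≤ EllE k := by
  calc π / 2 * √(1 - k ^ 2) = ∫ _ in (0)..(π / 2), √(1 - k ^ 2) := by simp
    _ ≤ EllE k := intervalIntegral.integral_mono_on (by positivity) intervalIntegrable_const
        (continuous_delta.intervalIntegrable _ _) fun θ _ => sqrt_one_sub_sq_le_delta

lemma EllE_le_pi_div_two : EllE k ≤ π / 2 := by
  calc EllE k ≤ ∫ _ in (0)..(π / 2), (1 : ℝ) :=
        intervalIntegral.integral_mono_on (by positivity)
          (continuous_delta.intervalIntegrable _ _) intervalIntegrable_const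
          fun θ _ => delta_le_one
    _ = π / 2 := by simp

lemma one_le_EllE (hk : k ^ 2 ≤ 1) : 1 ≤ EllE k := by
  calc (1 : ℝ) = ∫ θ in (0)..(π / 2), cos θ := by simp
    _ ≤ EllE k := intervalIntegral.integral_mono_on (by positivity)
        (continuous_cos.intervalIntegrable _ _) (continuous_delta.intervalIntegrable _ _)
        fun θ _ => cos_le_delta hk

lemma EllE_le_one_add_sqrt (hk : k ^ 2 ≤ 1) : EllE k ≤ 1 + √(1 - k ^ 2) := by
  calc EllE k ≤ ∫ θ in (0)..(π / 2), (cos θ + √(1 - k ^ 2) * sin θ) :=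
        intervalIntegral.integral_mono_on (by positivity)
          (continuous_delta.intervalIntegrable _ _)
          (Continuous.intervalIntegrable (by fun_prop) _ _)
          fun θ hθ => delta_le_cos_add hk hθ
    _ = 1 + √(1 - k ^ 2) := by
        rw [intervalIntegral.integral_add (continuous_cos.intervalIntegrable _ _)
          ((continuous_sin.intervalIntegrable _ _).const_mul _),
          intervalIntegral.integral_const_mul]
        simp

end Integrals

section Derivatives

variable {k : ℝ}

lemma isOpen_setOf_sq_lt_one : IsOpen {x : ℝ | x ^ 2 < 1} :=
  isOpen_lt (continuous_pow 2) continuous_const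

lemma hasDerivAt_EllK_eq_integral (hk : k ^ 2 < 1) :
    HasDerivAt EllK (∫ θ in (0)..(π / 2), k * sin θ ^ 2 / Δ(k, θ) ^ 3) k := by
  refine hasDerivAt_intervalIntegral_of_continuousOn_deriv (F := fun x θ => 1 / Δ(x, θ))
    (F' := fun x θ => x * sin θ ^ 2 / Δ(x, θ) ^ 3) isOpen_setOf_sq_lt_one hk
    (fun x hx => (continuous_one_div_delta hx).continuousOn) ?_ ?_
  · exact ContinuousOn.div (by fun_prop) (by fun_prop)
      fun p hp => pow_ne_zero 3 (delta_pos hp.1 p.2).ne'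
  · intro x hx θ _
    have h := ((hasDerivAt_pow 2 x).mul_const (sin θ ^ 2)).const_sub 1
      |>.sqrt (one_sub_sq_mul_sin_sq_pos hx θ).ne' |>.inv (delta_pos hx θ).ne'
    simp only [one_div]
    refine h.congr_deriv ?_
    have := delta_pos hx θ
    field_simp
    ring

lemma hasDerivAt_EllE_eq_integral (hk : k ^ 2 < 1) :
    HasDerivAt EllE (∫ θ in (0)..(π / 2), -(k * sin θ ^ 2) / Δ(k, θ)) k := by
  refine hasDerivAt_intervalIntegral_of_continuousOn_deriv (F := fun x θ => Δ(x, θ))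
    (F' := fun x θ => -(x * sin θ ^ 2) / Δ(x, θ)) isOpen_setOf_sq_lt_one hk
    (fun x _ => continuous_delta.continuousOn) ?_ ?_
  · exact ContinuousOn.div (by fun_prop) (by fun_prop)
      fun p hp => (delta_pos hp.1 p.2).ne'
  · intro x hx θ _
    have h := ((hasDerivAt_pow 2 x).mul_const (sin θ ^ 2)).const_sub 1
      |>.sqrt (one_sub_sq_mul_sin_sq_pos hx θ).ne'
    refine h.congr_deriv ?_
    have := delta_pos hx θ
    field_simp
    ring

lemma hasDerivAt_EllK (hk0 : k ≠ 0) (hk : k ^ 2 < 1) :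
    HasDerivAt EllK ((EllE k - (1 - k ^ 2) * EllK k) / (k * (1 - k ^ 2))) k := by
  convert hasDerivAt_EllK_eq_integral hk using 1
  have hk' : 1 - k ^ 2 ≠ 0 := by linarith
  have hpt : ∀ θ ∈ [[0, π / 2]], k * sin θ ^ 2 / Δ(k, θ) ^ 3
      = (1 / Δ(k, θ) ^ 3 - 1 / Δ(k, θ)) / k := by
    intro θ _
    have hΔ := delta_pos hk θ
    rw [show 1 / Δ(k, θ) ^ 3 - 1 / Δ(k, θ) = (1 - Δ(k, θ) ^ 2) / Δ(k, θ) ^ 3 by field_simp,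
      sq_delta hk]
    field_simp
    ring
  rw [intervalIntegral.integral_congr hpt, intervalIntegral.integral_div,
    intervalIntegral.integral_sub ((continuous_one_div_delta_pow hk 3).intervalIntegrable _ _)
      ((continuous_one_div_delta hk).intervalIntegrable _ _),
    integral_one_div_delta_pow_three hk, ← EllK]
  field_simp

lemma hasDerivAt_EllE (hk0 : k ≠ 0) (hk : k ^ 2 < 1) :
    HasDerivAt EllE ((EllE k - EllK k) / k) k := by
  convert hasDerivAt_EllE_eq_integral hk using 1
  have hpt : ∀ θ ∈ [[0, π / 2]],
      -(k * sin θ ^ 2) / Δ(k, θ) = (Δ(k, θ) - 1 / Δ(k, θ)) / k := by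
    intro θ _
    have hΔ := delta_pos hk θ
    field_simp
    rw [sq_delta hk]
    ring
  rw [intervalIntegral.integral_congr hpt, intervalIntegral.integral_div,
    intervalIntegral.integral_sub (continuous_delta.intervalIntegrable _ _)
      ((continuous_one_div_delta hk).intervalIntegrable _ _), ← EllK, ← EllE]

lemma sq_sqrt_one_sub_sq_lt_one (hk0 : k ≠ 0) (hk : k ^ 2 < 1) : √(1 - k ^ 2) ^ 2 < 1 := by
  rw [sq_sqrt (by linarith)]
  linarith [pow_pos (abs_pos.2 hk0) 2, sq_abs k]

lemma hasDerivAt_sqrt_one_sub_sq (hk : k ^ 2 < 1) :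
    HasDerivAt (fun x => √(1 - x ^ 2)) (-k / √(1 - k ^ 2)) k := by
  have h := ((hasDerivAt_pow 2 k).const_sub 1).sqrt (by linarith)
  refine h.congr_deriv ?_
  have : 0 < √(1 - k ^ 2) := sqrt_pos.2 (by linarith)
  field_simp
  ring

lemma hasDerivAt_EllK' (hk0 : k ≠ 0) (hk : k ^ 2 < 1) :
    HasDerivAt EllK' (-(EllE' k - k ^ 2 * EllK' k) / (k * (1 - k ^ 2))) k := by
  have hk' : √(1 - k ^ 2) ^ 2 = 1 - k ^ 2 := sq_sqrt (by linarith)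
  have hk'0 : √(1 - k ^ 2) ≠ 0 := (sqrt_pos.2 (by linarith)).ne'
  have h := (hasDerivAt_EllK hk'0 (sq_sqrt_one_sub_sq_lt_one hk0 hk)).comp k
    (hasDerivAt_sqrt_one_sub_sq hk)
  refine h.congr_deriv ?_
  have hk1 : 1 - k ^ 2 ≠ 0 := by linarith
  rw [hk', ← EllE', ← EllK']
  field_simp
  rw [hk']
  ring

lemma hasDerivAt_EllE' (hk0 : k ≠ 0) (hk : k ^ 2 < 1) :
    HasDerivAt EllE' (-k * (EllE' k - EllK' k) / (1 - k ^ 2)) k := by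
  have hk' : √(1 - k ^ 2) ^ 2 = 1 - k ^ 2 := sq_sqrt (by linarith)
  have hk'0 : √(1 - k ^ 2) ≠ 0 := (sqrt_pos.2 (by linarith)).ne'
  have h := (hasDerivAt_EllE hk'0 (sq_sqrt_one_sub_sq_lt_one hk0 hk)).comp k
    (hasDerivAt_sqrt_one_sub_sq hk)
  refine h.congr_deriv ?_
  rw [← EllE', ← EllK', div_mul_div_comm, ← sq, hk']
  ring

end Derivatives

section Legendre

noncomputable def EllLegendre (k : ℝ) : ℝ :=
  EllE k * EllK' k + EllE' k * EllK k - EllK k * EllK' k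

variable {k : ℝ}

lemma hasDerivAt_EllLegendre (hk0 : k ≠ 0) (hk : k ^ 2 < 1) : HasDerivAt EllLegendre 0 k := by
  have hk1 : 1 - k ^ 2 ≠ 0 := by linarith
  have h := (((hasDerivAt_EllE hk0 hk).mul (hasDerivAt_EllK' hk0 hk)).add
    ((hasDerivAt_EllE' hk0 hk).mul (hasDerivAt_EllK hk0 hk))).sub
    ((hasDerivAt_EllK hk0 hk).mul (hasDerivAt_EllK' hk0 hk))
  refine h.congr_deriv ?_
  field_simp
  ring

lemma tendsto_sqrt_one_sub_sq_zero : Tendsto (fun k : ℝ => √(1 - k ^ 2)) (𝓝 0) (𝓝 1) :=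
  (by fun_prop : Continuous fun k : ℝ => √(1 - k ^ 2)).tendsto' 0 1 (by simp)

lemma tendsto_EllK_zero : Tendsto EllK (𝓝 0) (𝓝 (π / 2)) := by
  have hupper : Tendsto (fun k : ℝ => π / 2 / √(1 - k ^ 2)) (𝓝 0) (𝓝 (π / 2)) := by
    have h := (tendsto_const_nhds (x := π / 2)).div tendsto_sqrt_one_sub_sq_zero one_ne_zero
    rwa [div_one] at h
  have hk : ∀ᶠ k : ℝ in 𝓝 0, k ^ 2 < 1 := isOpen_setOf_sq_lt_one.mem_nhds (by simp)
  exact tendsto_of_tendsto_of_tendsto_of_le_of_le' tendsto_const_nhds hupper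
    (hk.mono fun _ => pi_div_two_le_EllK) (hk.mono fun _ => EllK_le_pi_div_two_div_sqrt)

lemma sq_sqrt_one_sub_sq_le_one (k : ℝ) : √(1 - k ^ 2) ^ 2 ≤ 1 :=
  pow_le_one₀ (sqrt_nonneg _) (sqrt_le_one.2 (by nlinarith))

lemma tendsto_EllE'_zero : Tendsto EllE' (𝓝 0) (𝓝 1) := by
  have hupper : Tendsto (fun k : ℝ => 1 + √(1 - √(1 - k ^ 2) ^ 2)) (𝓝 0) (𝓝 1) :=
    (by fun_prop : Continuous fun k : ℝ => 1 + √(1 - √(1 - k ^ 2) ^ 2)).tendsto' 0 1 (by simp)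
  exact tendsto_of_tendsto_of_tendsto_of_le_of_le tendsto_const_nhds hupper
    (fun k => one_le_EllE (sq_sqrt_one_sub_sq_le_one k))
    (fun k => EllE_le_one_add_sqrt (sq_sqrt_one_sub_sq_le_one k))

lemma EllK'_mul_sub_le (hk : k ∈ Ioo 0 1) :
    EllK' k * (EllK k - EllE k) ≤ (π / 2) ^ 2 * (k / √(1 - k ^ 2)) := by
  obtain ⟨hk0, hk1⟩ := hk
  have hk2 : k ^ 2 < 1 := by nlinarith
  have hk' : √(1 - k ^ 2) ^ 2 = 1 - k ^ 2 := sq_sqrt (by linarith)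
  have hk'0 : 0 < √(1 - k ^ 2) := sqrt_pos.2 (by linarith)
  have hK' : EllK' k ≤ π / 2 / k := by
    have h := EllK_le_pi_div_two_div_sqrt (k := √(1 - k ^ 2)) (by rw [hk']; nlinarith)
    rwa [hk', sub_sub_cancel, sqrt_sq hk0.le] at h
  have hKE : EllK k - EllE k ≤ π / 2 / √(1 - k ^ 2) - π / 2 * √(1 - k ^ 2) := by
    linarith [EllK_le_pi_div_two_div_sqrt hk2, pi_div_two_mul_le_EllE (k := k)]
  calc EllK' k * (EllK k - EllE k)
      ≤ π / 2 / k * (π / 2 / √(1 - k ^ 2) - π / 2 * √(1 - k ^ 2)) :=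
        mul_le_mul hK' hKE (by linarith [pi_div_two_le_EllK hk2, EllE_le_pi_div_two (k := k)])
          (by positivity)
    _ = (π / 2) ^ 2 * (k / √(1 - k ^ 2)) := by
        field_simp
        rw [hk']
        ring

lemma tendsto_EllK'_mul_sub :
    Tendsto (fun k => EllK' k * (EllK k - EllE k)) (𝓝[>] 0) (𝓝 0) := by
  have hupper :
      Tendsto (fun k : ℝ => (π / 2) ^ 2 * (k / √(1 - k ^ 2))) (𝓝[>] 0) (𝓝 0) := by
    have h := tendsto_const_nhds (x := (π / 2) ^ 2) |>.mul
      (tendsto_id.div tendsto_sqrt_one_sub_sq_zero one_ne_zero)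
    simpa using h.mono_left nhdsWithin_le_nhds
  have hk : Ioo (0 : ℝ) 1 ∈ 𝓝[>] 0 := Ioo_mem_nhdsGT one_pos
  refine tendsto_of_tendsto_of_tendsto_of_le_of_le' tendsto_const_nhds hupper ?_
    (eventually_of_mem hk fun k hk => EllK'_mul_sub_le hk)
  refine eventually_of_mem hk fun k hk => mul_nonneg (EllK_nonneg _) ?_
  have hk2 : k ^ 2 < 1 := by nlinarith [hk.1, hk.2]
  linarith [pi_div_two_le_EllK hk2, EllE_le_pi_div_two (k := k)]

lemma tendsto_EllLegendre : Tendsto EllLegendre (𝓝[>] 0) (𝓝 (π / 2)) := by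
  have h := ((tendsto_EllE'_zero.mul tendsto_EllK_zero).mono_left nhdsWithin_le_nhds).sub
    tendsto_EllK'_mul_sub
  rw [one_mul, sub_zero] at h
  refine h.congr fun k => ?_
  rw [EllLegendre]
  ring

theorem EllLegendre_eq_pi_div_two (hk : k ∈ Ioo 0 1) : EllLegendre k = π / 2 := by
  have hderiv : ∀ x ∈ Ioo (0 : ℝ) 1, HasDerivAt EllLegendre 0 x := fun x hx =>
    hasDerivAt_EllLegendre hx.1.ne' (by nlinarith [hx.1, hx.2])
  obtain ⟨c, hc⟩ := isOpen_Ioo.exists_is_const_of_deriv_eq_zero isPreconnected_Ioo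
    (fun x hx => (hderiv x hx).differentiableAt.differentiableWithinAt)
    (fun x hx => (hderiv x hx).deriv)
  have hlim : Tendsto EllLegendre (𝓝[>] 0) (𝓝 c) :=
    tendsto_const_nhds.congr' <|
      eventually_of_mem (Ioo_mem_nhdsGT one_pos) fun x hx => (hc x hx).symm
  rw [hc k hk, tendsto_nhds_unique hlim tendsto_EllLegendre]

end Legendre

theorem stmt_8 (k : ℝ) (hk : k ∈ Set.Ioo (0:ℝ) 1) :
    HasDerivAt (fun k => EllK' k / EllK k)
      (-π / (2 * k * Real.sqrt (1 - k^2) ^ 2 * EllK k ^ 2)) k := by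
  have hk0 : k ≠ 0 := hk.1.ne'
  have hk2 : k ^ 2 < 1 := by nlinarith [hk.1, hk.2]
  have hk1 : 1 - k ^ 2 ≠ 0 := by linarith
  have hK : EllK k ≠ 0 := (pi_div_two_pos.trans_le (pi_div_two_le_EllK hk2)).ne'
  have hL := EllLegendre_eq_pi_div_two hk
  rw [EllLegendre] at hL
  refine ((hasDerivAt_EllK' hk0 hk2).div (hasDerivAt_EllK hk0 hk2) hK).congr_deriv ?_
  rw [sq_sqrt (by linarith)]
  field_simp
  linear_combination (-2) * hL
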